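/- arXiv:1908.08565 — 3 statements merged into one kernel-verified Lean document; each statement's English description precedes it below -/
import Mathlib

section
/- Suppose α_q ≥ 0 for all q = 1,…,l, and suppose the equation x = φ_α(x) has a unique solution x ∈ (0,1). Then the constant vector x·1ₙ is the unique solution in [0,1]^n of the vector fixed-point equation X = (1ₙ + tanh(∇f(X)))/2. -/
open MeasureTheory ProbabilityTheory Real Set

noncomputable section

/-- The real-valued vertex configuration associated to a boolean configuration. -/
def boolToR (n : ℕ) (X : Fin n → Bool) : Fin n → ℝ := fun i => if X i then 1 else 0

/-- The 1-norm on ℝⁿ. -/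
def norm1 (n : ℕ) (x : Fin n → ℝ) : ℝ := ∑ i, |x i|

/-- `C_j^m(X)`: the sum over (m-1)-tuples of pairwise distinct indices, all distinct
from `j`, of the products of the corresponding entries of `X`; `C_j^1 = 1`. -/
def Cvec (n m : ℕ) (X : Fin n → ℝ) (j : Fin n) : ℝ :=
  ∑ g ∈ Finset.univ.filter (fun g : Fin (m - 1) ↪ Fin n => ∀ k, g k ≠ j),
    ∏ k, X (g k)

/-- The subgraph counting function with parameters `p`, `m₁,…,m_l`, `α₁,…,α_l`. -/
def scf (n l : ℕ) (p : ℝ) (m : Fin l → ℕ) (α : Fin l → ℝ) (X : Fin n → ℝ) : ℝ :=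
  (∑ q, (α q / (n : ℝ) ^ (m q - 1)) * ∑ g : Fin (m q) ↪ Fin n, ∏ k, X (g k)) +
    Real.log (p / (1 - p)) * ∑ i, |X i|

/-- The discrete derivative `∂ⱼf(X) = (f(X^{j←1}) - f(X^{j←0}))/2`. -/
def dder (n : ℕ) (f : (Fin n → ℝ) → ℝ) (X : Fin n → ℝ) (j : Fin n) : ℝ :=
  (f (Function.update X j 1) - f (Function.update X j 0)) / 2

/-- The polynomial extension of the discrete gradient of the subgraph counting function:
`∂ⱼf(X) = Σ_q (m_q α_q/(2 n^{m_q-1})) C_j^{m_q}(X) + ½ log(p/(1-p))`. -/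
def gradf (n l : ℕ) (p : ℝ) (m : Fin l → ℕ) (α : Fin l → ℝ) (X : Fin n → ℝ)
    (j : Fin n) : ℝ :=
  (∑ q, ((m q : ℝ) * α q / (2 * (n : ℝ) ^ (m q - 1))) * Cvec n (m q) X j) +
    Real.log (p / (1 - p)) / 2

/-- `C_α = max{2, ½|log(p/(1-p))| + ½ Σ_q |α_q| m_q (m_q - 1)}`. -/
def Calpha (l : ℕ) (p : ℝ) (m : Fin l → ℕ) (α : Fin l → ℝ) : ℝ :=
  max 2 (|Real.log (p / (1 - p))| / 2 + (∑ q, |α q| * (m q : ℝ) * ((m q : ℝ) - 1)) / 2)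

/-- `Φ(X) = (1ₙ + tanh(∇f(X)))/2`, entrywise. -/
def Phi (n l : ℕ) (p : ℝ) (m : Fin l → ℕ) (α : Fin l → ℝ) (X : Fin n → ℝ) :
    Fin n → ℝ :=
  fun j => (1 + Real.tanh (gradf n l p m α X j)) / 2

/-- The set `X_f` of near fixed points of `X ↦ (1ₙ + tanh(∇f(X)))/2` in `[0,1]ⁿ`. -/
def Xf (n l : ℕ) (p : ℝ) (m : Fin l → ℕ) (α : Fin l → ℝ) : Set (Fin n → ℝ) :=
  {X | (∀ i, X i ∈ Set.Icc (0:ℝ) 1) ∧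
    norm1 n (fun j => X j - Phi n l p m α X j) ≤
      5000 * (Calpha l p m α) ^ 2 * (n : ℝ) ^ ((7:ℝ)/8)}

/-- The one-dimensional fixed point function `φ_α`. -/
def phiA (n l : ℕ) (p : ℝ) (m : Fin l → ℕ) (α : Fin l → ℝ) (x : ℝ) : ℝ :=
  (1 + Real.tanh (Real.log (p / (1 - p)) / 2 +
    (∑ q, (m q : ℝ) * α q * (∏ i ∈ Finset.Icc 1 (m q - 1), (1 - (i : ℝ) / n)) *
      x ^ (m q - 1)) / 2)) / 2


/-!
Since `α ≥ 0`, the map `Φ(X) = (1ₙ + tanh ∇f(X))/2` is monotone on `[0,1]ⁿ`, and on constant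
vectors it is `φ_α` applied entrywise: `C_j^m(a·1ₙ) = (n-1)⋯(n-m+1)·a^{m-1}`. If `X = Φ(X)` has
smallest entry `a` and largest entry `b`, monotonicity gives `φ_α(a) ≤ a` and `b ≤ φ_α(b)`.
As `φ_α` maps into `(0,1)`, the intermediate value theorem yields fixed points of `φ_α` in `[0,a]`
and in `[b,1]`; both equal `x`, so `b ≤ x ≤ a` and `X = x·1ₙ`.
-/

theorem Real.tanh_eq_one_sub_two_div (x : ℝ) : tanh x = 1 - 2 / (exp (2 * x) + 1) := by
  have hexp : exp (2 * x) = exp x ^ 2 := by rw [← Real.exp_nat_mul]; norm_num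
  rw [tanh_eq, exp_neg, hexp]
  field_simp
  ring

theorem Real.tanh_monotone : Monotone tanh := fun a b hab => by
  simp only [tanh_eq_one_sub_two_div]
  gcongr

@[fun_prop]
theorem Real.continuous_tanh : Continuous tanh := by
  rw [show tanh = sinh / cosh from funext tanh_eq_sinh_div_cosh]
  exact continuous_sinh.div continuous_cosh fun x => (cosh_pos x).ne'

theorem one_add_tanh_div_two_mem_Ioo (y : ℝ) : (1 + tanh y) / 2 ∈ Ioo 0 1 := by
  constructor <;> linarith [neg_one_lt_tanh y, tanh_lt_one y]

theorem card_filter_embedding_forall_ne {α : Type*} [Fintype α] [DecidableEq α] (r : ℕ) (j : α) :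
    (Finset.univ.filter (fun g : Fin r ↪ α => ∀ k, g k ≠ j)).card
      = (Fintype.card α - 1).descFactorial r := by
  rw [← Fintype.card_subtype]
  refine (Fintype.card_congr (Equiv.codRestrict (Fin r) ({j}ᶜ : Set α))).trans ?_
  simp [Fintype.card_embedding_eq, Finset.filter_ne']

theorem cast_descFactorial_pred_eq {n : ℕ} (hn : 0 < n) (r : ℕ) :
    (((n - 1).descFactorial r : ℕ) : ℝ) = n ^ r * ∏ i ∈ Finset.Icc 1 r, (1 - (i : ℝ) / n) := by
  induction r with
  | zero => simp
  | succ r ih =>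
    rw [Finset.prod_Icc_succ_top (by omega), Nat.descFactorial_succ, Nat.cast_mul, pow_succ]
    rcases le_or_gt (r + 1) n with hr | hr
    · rw [ih, Nat.cast_sub (show r ≤ n - 1 by omega), Nat.cast_sub (show 1 ≤ n from hn)]
      field_simp
      push_cast
      ring
    · have hzero : (n - 1).descFactorial r = 0 := Nat.descFactorial_eq_zero_iff_lt.2 (by omega)
      rw [hzero, Nat.cast_zero] at ih
      rw [show n - 1 - r = 0 by omega, Nat.cast_zero, zero_mul]
      linear_combination (n * (1 - ((r + 1 : ℕ) : ℝ) / n)) * ih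

section SubgraphCounting

variable {n l : ℕ} {p : ℝ} {m : Fin l → ℕ} {α : Fin l → ℝ}

theorem Cvec_const (M : ℕ) (a : ℝ) (j : Fin n) :
    Cvec n M (fun _ => a) j = ((n - 1).descFactorial (M - 1) : ℕ) * a ^ (M - 1) := by
  simp only [Cvec, Finset.prod_const, Finset.card_univ, Fintype.card_fin, Finset.sum_const,
    card_filter_embedding_forall_ne, nsmul_eq_mul]

theorem gradf_const (a : ℝ) (j : Fin n) :
    gradf n l p m α (fun _ => a) j = Real.log (p / (1 - p)) / 2 +
      (∑ q, (m q : ℝ) * α q * (∏ i ∈ Finset.Icc 1 (m q - 1), (1 - (i : ℝ) / n)) *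
        a ^ (m q - 1)) / 2 := by
  have hn : (n : ℝ) ≠ 0 := Nat.cast_ne_zero.2 j.pos.ne'
  rw [gradf, add_comm, Finset.sum_div]
  congr 1
  refine Finset.sum_congr rfl fun q _ => ?_
  rw [Cvec_const, cast_descFactorial_pred_eq j.pos]
  field_simp

theorem Phi_const (a : ℝ) :
    Phi n l p m α (fun _ => a) = fun _ => phiA n l p m α a := by
  funext j
  rw [Phi, phiA, gradf_const a j]

theorem Cvec_mono (M : ℕ) {X Y : Fin n → ℝ} (hY : 0 ≤ Y) (hYX : Y ≤ X) :
    Cvec n M Y ≤ Cvec n M X := fun _ =>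
  Finset.sum_le_sum fun _ _ => Finset.prod_le_prod (fun _ _ => hY _) (fun _ _ => hYX _)

theorem gradf_mono (hα : ∀ q, 0 ≤ α q) {X Y : Fin n → ℝ} (hY : 0 ≤ Y) (hYX : Y ≤ X) :
    gradf n l p m α Y ≤ gradf n l p m α X := fun j => by
  unfold gradf
  gcongr with q
  · exact div_nonneg (mul_nonneg (Nat.cast_nonneg _) (hα q)) (by positivity)
  · exact Cvec_mono _ hY hYX j

theorem Phi_mono (hα : ∀ q, 0 ≤ α q) {X Y : Fin n → ℝ} (hY : 0 ≤ Y) (hYX : Y ≤ X) :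
    Phi n l p m α Y ≤ Phi n l p m α X := fun j => by
  unfold Phi
  gcongr
  exact Real.tanh_monotone (gradf_mono hα hY hYX j)

theorem continuous_phiA : Continuous (phiA n l p m α) := by
  unfold phiA
  fun_prop

theorem phiA_mem_Ioo (t : ℝ) : phiA n l p m α t ∈ Ioo 0 1 :=
  one_add_tanh_div_two_mem_Ioo _

end SubgraphCounting

section UniqueFixedPoint

variable {ψ : ℝ → ℝ} {x : ℝ}

theorem fixedPoint_le_of_map_le (hψ : Continuous ψ) (h0 : 0 ≤ ψ 0)
    (huniq : ∀ y ∈ Icc (0 : ℝ) 1, y = ψ y → y = x) {a : ℝ} (ha : a ∈ Icc (0 : ℝ) 1)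
    (hψa : ψ a ≤ a) : x ≤ a := by
  obtain ⟨y, hy, hψy⟩ := intermediate_value_Icc' ha.1 (hψ.sub continuous_id).continuousOn
    (show (0 : ℝ) ∈ Icc (ψ a - a) (ψ 0 - 0) by constructor <;> linarith)
  rw [← huniq y ⟨hy.1, hy.2.trans ha.2⟩ (sub_eq_zero.1 hψy).symm]
  exact hy.2

theorem le_fixedPoint_of_le_map (hψ : Continuous ψ) (h1 : ψ 1 ≤ 1)
    (huniq : ∀ y ∈ Icc (0 : ℝ) 1, y = ψ y → y = x) {b : ℝ} (hb : b ∈ Icc (0 : ℝ) 1)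
    (hψb : b ≤ ψ b) : b ≤ x := by
  obtain ⟨y, hy, hψy⟩ := intermediate_value_Icc' hb.2 (hψ.sub continuous_id).continuousOn
    (show (0 : ℝ) ∈ Icc (ψ 1 - 1) (ψ b - b) by constructor <;> linarith)
  rw [← huniq y ⟨hb.1.trans hy.1, hy.2⟩ (sub_eq_zero.1 hψy).symm]
  exact hy.1

theorem eq_const_of_fixedPoint {ι : Type*} [Finite ι] {F : (ι → ℝ) → ι → ℝ}
    (hF : ∀ {X Y : ι → ℝ}, 0 ≤ Y → Y ≤ X → F Y ≤ F X)
    (hFconst : ∀ a, F (fun _ => a) = fun _ => ψ a) (hψ : Continuous ψ)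
    (h0 : 0 ≤ ψ 0) (h1 : ψ 1 ≤ 1) (huniq : ∀ y ∈ Icc (0 : ℝ) 1, y = ψ y → y = x)
    {X : ι → ℝ} (hX : ∀ i, X i ∈ Icc (0 : ℝ) 1) (hfix : X = F X) : X = fun _ => x := by
  funext i
  have : Nonempty ι := ⟨i⟩
  obtain ⟨j₀, hj₀⟩ := Finite.exists_min X
  obtain ⟨j₁, hj₁⟩ := Finite.exists_max X
  have hmin : ψ (X j₀) ≤ X j₀ :=
    calc ψ (X j₀) = F (fun _ => X j₀) j₀ := by rw [hFconst]
      _ ≤ F X j₀ := hF (fun _ => (hX j₀).1) hj₀ j₀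
      _ = X j₀ := (congrFun hfix j₀).symm
  have hmax : X j₁ ≤ ψ (X j₁) :=
    calc X j₁ = F X j₁ := congrFun hfix j₁
      _ ≤ F (fun _ => X j₁) j₁ := hF (fun i => (hX i).1) hj₁ j₁
      _ = ψ (X j₁) := by rw [hFconst]
  exact le_antisymm ((hj₁ i).trans (le_fixedPoint_of_le_map hψ h1 huniq (hX j₁) hmax))
    ((fixedPoint_le_of_map_le hψ h0 huniq (hX j₀) hmin).trans (hj₀ i))

end UniqueFixedPoint

theorem stmt10_general (n l : ℕ) (p : ℝ) (m : Fin l → ℕ) (α : Fin l → ℝ) (hα : ∀ q, 0 ≤ α q)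
    (x : ℝ) (hfix : x = phiA n l p m α x)
    (huniq : ∀ y ∈ Set.Icc (0:ℝ) 1, y = phiA n l p m α y → y = x) :
    ∀ X : Fin n → ℝ, (∀ i, X i ∈ Set.Icc (0:ℝ) 1) →
      (X = Phi n l p m α X ↔ X = fun _ => x) := by
  intro X hX
  refine ⟨eq_const_of_fixedPoint (Phi_mono hα) Phi_const continuous_phiA
    (phiA_mem_Ioo 0).1.le (phiA_mem_Ioo 1).2.le huniq hX, ?_⟩
  rintro rfl
  rw [Phi_const, ← hfix]

/-- if `α_q ≥ 0` for all `q` and `x = φ_α(x)` has a unique solution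
`x ∈ (0,1)`, then the constant vector `x·1ₙ` is the unique solution in `[0,1]ⁿ` of
`X = (1ₙ + tanh(∇f(X)))/2`. -/
theorem stmt10 (n l : ℕ) (hn : 0 < n) (p : ℝ) (hp : p ∈ Set.Ioo (0:ℝ) 1)
    (m : Fin l → ℕ) (hm : ∀ q, 2 ≤ m q) (hminj : Function.Injective m)
    (α : Fin l → ℝ) (hα : ∀ q, 0 ≤ α q)
    (x : ℝ) (hx : x ∈ Set.Ioo (0:ℝ) 1) (hfix : x = phiA n l p m α x)
    (huniq : ∀ y ∈ Set.Icc (0:ℝ) 1, y = phiA n l p m α y → y = x) :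
    ∀ X : Fin n → ℝ, (∀ i, X i ∈ Set.Icc (0:ℝ) 1) →
      (X = Phi n l p m α X ↔ X = fun _ => x) :=
  stmt10_general n l p m α hα x hfix huniq
end
end

section
/- Set J_α = ¼ Σ_{q=1}^l |α_q| m_q (m_q − 1) and suppose J_α < 1. Then the fixed-point equation X = Φ(X) has a unique solution X_c in [0,1]^n, X_c is a constant vector, and for every X ∈ X_f, ‖X − X_c‖₁ ≤ (5000 C_α² / (1 − J_α)) · n^{7/8}. -/
open MeasureTheory ProbabilityTheory Real Set

noncomputable section

/-!
`Φ` is a contraction of `[0,1]ⁿ` for the `ℓ¹` norm with constant `J_α`: `tanh` is 1-Lipschitz,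
and `C_j^m` is a sum of products of entries in `[0,1]`, so that summed over `j` its variation is
at most `(m-1) nᵐ⁻¹ ‖X - Y‖₁`. Hence a fixed point `X_c` is unique, and every `X ∈ [0,1]ⁿ`
satisfies `‖X - X_c‖₁ ≤ ‖X - Φ(X)‖₁ / (1 - J_α)`. Since `Φ` commutes with permutations of the
coordinates, it maps constant vectors to constant vectors, and the intermediate value theorem
applied to `c ↦ Φ(c 1ₙ)ⱼ - c` on `[0,1]` produces a constant fixed point.
-/

open Finset

namespace Real

theorem hasDerivAt_tanh (x : ℝ) : HasDerivAt tanh (1 / cosh x ^ 2) x := by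
  have h := (hasDerivAt_sinh x).div (hasDerivAt_cosh x) (cosh_pos x).ne'
  rw [show tanh = sinh / cosh from funext tanh_eq_sinh_div_cosh]
  refine h.congr_deriv ?_
  rw [← cosh_sq_sub_sinh_sq x]
  ring

theorem differentiable_tanh : Differentiable ℝ tanh :=
  fun x => (hasDerivAt_tanh x).differentiableAt

@[fun_prop]
theorem continuous_tanh_s14 : Continuous tanh := differentiable_tanh.continuous

theorem lipschitzWith_tanh : LipschitzWith 1 tanh := by
  refine lipschitzWith_of_nnnorm_deriv_le differentiable_tanh fun x => ?_
  rw [← NNReal.coe_le_coe, coe_nnnorm, (hasDerivAt_tanh x).deriv, norm_of_nonneg (by positivity)]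
  exact div_le_one_of_le₀ (one_le_pow₀ (one_le_cosh x)) (by positivity)

theorem abs_tanh_sub_tanh_le (a b : ℝ) : |tanh a - tanh b| ≤ |a - b| := by
  simpa [dist_eq] using lipschitzWith_tanh.dist_le_mul a b

end Real

theorem abs_prod_sub_prod_le {ι : Type*} (s : Finset ι) {f g : ι → ℝ}
    (hf : ∀ i ∈ s, |f i| ≤ 1) (hg : ∀ i ∈ s, |g i| ≤ 1) :
    |∏ i ∈ s, f i - ∏ i ∈ s, g i| ≤ ∑ i ∈ s, |f i - g i| := by
  classical
  induction s using Finset.induction with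
  | empty => simp
  | insert a s ha ih =>
    simp only [Finset.mem_insert, forall_eq_or_imp] at hf hg
    rw [prod_insert ha, prod_insert ha, sum_insert ha]
    have hprod : |∏ i ∈ s, f i| ≤ 1 := by
      rw [abs_prod]; exact prod_le_one (fun _ _ => abs_nonneg _) hf.2
    calc |f a * ∏ i ∈ s, f i - g a * ∏ i ∈ s, g i|
        = |(f a - g a) * ∏ i ∈ s, f i + g a * (∏ i ∈ s, f i - ∏ i ∈ s, g i)| := by ring_nf
      _ ≤ |f a - g a| * 1 + 1 * ∑ i ∈ s, |f i - g i| := by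
          refine (abs_add_le _ _).trans ?_
          rw [abs_mul, abs_mul]
          gcongr
          exacts [hg.1, ih hf.2 hg.2]
      _ = _ := by ring

theorem sum_embedding_apply_le {N n : ℕ} (k : Fin N) {Z : Fin n → ℝ} (hZ : ∀ i, 0 ≤ Z i) :
    ∑ g : Fin N ↪ Fin n, Z (g k) ≤ (n : ℝ) ^ (N - 1) * ∑ i, Z i := by
  classical
  calc ∑ g : Fin N ↪ Fin n, Z (g k)
      = ∑ g ∈ univ.map ⟨fun g : Fin N ↪ Fin n => (g : Fin N → Fin n), DFunLike.coe_injective⟩,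
          Z (g k) := by rw [sum_map]; rfl
    _ ≤ ∑ g : Fin N → Fin n, Z (g k) :=
        sum_le_sum_of_subset_of_nonneg (subset_univ _) fun _ _ _ => hZ _
    _ = (n : ℝ) ^ (N - 1) * ∑ i, Z i := by
        rw [← Fintype.piFinset_univ, Fintype.sum_piFinset_apply, nsmul_eq_mul]
        simp

theorem sum_embedding_sum_apply_le {N n : ℕ} {Z : Fin n → ℝ} (hZ : ∀ i, 0 ≤ Z i) :
    ∑ g : Fin N ↪ Fin n, ∑ k, Z (g k) ≤ N * (n : ℝ) ^ (N - 1) * ∑ i, Z i := by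
  rw [sum_comm]
  calc ∑ k : Fin N, ∑ g : Fin N ↪ Fin n, Z (g k)
      ≤ ∑ _k : Fin N, (n : ℝ) ^ (N - 1) * ∑ i, Z i :=
        sum_le_sum fun k _ => sum_embedding_apply_le k hZ
    _ = _ := by simp [mul_assoc]

theorem natCast_mul_natCast_pred (m : ℕ) : (m : ℝ) * ((m - 1 : ℕ) : ℝ) = m * (m - 1) := by
  cases m <;> simp

theorem norm1_nonneg {n : ℕ} (x : Fin n → ℝ) : 0 ≤ norm1 n x :=
  sum_nonneg fun i _ => abs_nonneg (x i)

theorem norm1_sub_le_add {n : ℕ} (x y z : Fin n → ℝ) :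
    norm1 n (fun i => x i - z i) ≤ norm1 n (fun i => x i - y i) + norm1 n (fun i => y i - z i) := by
  rw [norm1, norm1, norm1, ← sum_add_distrib]
  exact sum_le_sum fun i _ => abs_sub_le _ _ _

theorem eq_of_norm1_sub_nonpos {n : ℕ} {x y : Fin n → ℝ} (h : norm1 n (fun i => x i - y i) ≤ 0) :
    x = y := by
  funext i
  have h0 := (sum_eq_zero_iff_of_nonneg fun i _ => abs_nonneg (x i - y i)).1
    (le_antisymm h (norm1_nonneg _)) i (mem_univ i)
  exact sub_eq_zero.1 (abs_eq_zero.1 h0)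

section Cvec

variable {n : ℕ} (m : ℕ) {X Y : Fin n → ℝ}

theorem abs_cvec_sub_le (hX : ∀ i, |X i| ≤ 1) (hY : ∀ i, |Y i| ≤ 1) (j : Fin n) :
    |Cvec n m X j - Cvec n m Y j| ≤ ∑ g : Fin (m - 1) ↪ Fin n, ∑ k, |X (g k) - Y (g k)| := by
  rw [Cvec, Cvec, ← sum_sub_distrib]
  refine (abs_sum_le_sum_abs _ _).trans <| (sum_le_sum fun g _ => ?_).trans <|
    sum_le_sum_of_subset_of_nonneg (filter_subset _ _) fun g _ _ => by positivity
  exact abs_prod_sub_prod_le _ (fun k _ => hX (g k)) (fun k _ => hY (g k))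

theorem sum_abs_cvec_sub_le (hX : ∀ i, |X i| ≤ 1) (hY : ∀ i, |Y i| ≤ 1) :
    ∑ j, |Cvec n m X j - Cvec n m Y j|
      ≤ ((m - 1 : ℕ) : ℝ) * (n : ℝ) ^ (m - 1) * ∑ i, |X i - Y i| := by
  calc ∑ j, |Cvec n m X j - Cvec n m Y j|
      ≤ ∑ _j : Fin n, ((m - 1 : ℕ) : ℝ) * (n : ℝ) ^ (m - 1 - 1) * ∑ i, |X i - Y i| :=
        sum_le_sum fun j _ => (abs_cvec_sub_le m hX hY j).trans <|
          sum_embedding_sum_apply_le fun i => abs_nonneg (X i - Y i)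
    _ = _ := by
        rw [sum_const, card_univ, Fintype.card_fin, nsmul_eq_mul]
        rcases Nat.eq_zero_or_pos (m - 1) with h | h
        · simp [h]
        · rw [← Nat.succ_pred_eq_of_pos h, pow_succ]
          simp only [Nat.pred_eq_sub_one, Nat.succ_sub_one]
          ring

end Cvec

theorem cvec_comp_perm {n : ℕ} (M : ℕ) (X : Fin n → ℝ) (σ : Equiv.Perm (Fin n)) (j : Fin n) :
    Cvec n M (X ∘ σ) j = Cvec n M X (σ j) := by
  refine sum_equiv (Equiv.embeddingCongr (.refl _) σ) (fun g => ?_) (fun g _ => rfl)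
  simp [Equiv.embeddingCongr_apply]

def Jalpha (l : ℕ) (m : Fin l → ℕ) (α : Fin l → ℝ) : ℝ :=
  (∑ q, |α q| * (m q : ℝ) * ((m q : ℝ) - 1)) / 4

section Phi

variable {n l : ℕ} {p : ℝ} {m : Fin l → ℕ} {α : Fin l → ℝ}

theorem abs_gradf_sub_le (X Y : Fin n → ℝ) (j : Fin n) :
    |gradf n l p m α X j - gradf n l p m α Y j|
      ≤ ∑ q, |(m q : ℝ) * α q / (2 * (n : ℝ) ^ (m q - 1))|
          * |Cvec n (m q) X j - Cvec n (m q) Y j| := by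
  rw [gradf, gradf, add_sub_add_right_eq_sub, ← sum_sub_distrib]
  simp only [← mul_sub, ← abs_mul]
  exact abs_sum_le_sum_abs _ _

-- Only an inequality: for `n = 0` the coefficient is `0` by the convention `x / 0 = 0`.
theorem abs_gradf_coeff_mul_le (M N : ℕ) (a : ℝ) :
    |(M : ℝ) * a / (2 * (n : ℝ) ^ N)| * (N * (n : ℝ) ^ N) ≤ |a| * M * N / 2 := by
  rcases (pow_nonneg n.cast_nonneg N : (0 : ℝ) ≤ n ^ N).eq_or_lt with h | h
  · rw [← h, mul_zero, mul_zero]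
    have : (0 : ℝ) ≤ |a| * M * N := by positivity
    linarith
  · rw [abs_div, abs_mul, Nat.abs_cast, abs_of_pos (by positivity : 0 < 2 * (n : ℝ) ^ N)]
    field_simp
    exact le_rfl

theorem norm1_phi_sub_le {X Y : Fin n → ℝ} (hX : ∀ i, X i ∈ Icc (0 : ℝ) 1)
    (hY : ∀ i, Y i ∈ Icc (0 : ℝ) 1) :
    norm1 n (fun j => Phi n l p m α X j - Phi n l p m α Y j)
      ≤ Jalpha l m α * norm1 n (fun i => X i - Y i) := by
  have habs : ∀ {Z : Fin n → ℝ}, (∀ i, Z i ∈ Icc (0 : ℝ) 1) → ∀ i, |Z i| ≤ 1 :=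
    fun hZ i => abs_le.2 ⟨by linarith [(hZ i).1], (hZ i).2⟩
  set D := norm1 n (fun i => X i - Y i)
  set c : Fin l → ℝ := fun q => (m q : ℝ) * α q / (2 * (n : ℝ) ^ (m q - 1))
  calc norm1 n (fun j => Phi n l p m α X j - Phi n l p m α Y j)
      ≤ ∑ j, |gradf n l p m α X j - gradf n l p m α Y j| / 2 := sum_le_sum fun j _ => by
        simp only [Phi]
        rw [← sub_div, add_sub_add_left_eq_sub, abs_div, abs_two]
        exact div_le_div_of_nonneg_right (abs_tanh_sub_tanh_le _ _) zero_le_two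
    _ ≤ ∑ j, (∑ q, |c q| * |Cvec n (m q) X j - Cvec n (m q) Y j|) / 2 := by
        gcongr with j
        exact abs_gradf_sub_le X Y j
    _ = (∑ q, |c q| * ∑ j, |Cvec n (m q) X j - Cvec n (m q) Y j|) / 2 := by
        rw [← sum_div, sum_comm]
        simp only [mul_sum]
    _ ≤ (∑ q, |c q| * (((m q - 1 : ℕ) : ℝ) * (n : ℝ) ^ (m q - 1) * D)) / 2 := by
        gcongr with q
        exact sum_abs_cvec_sub_le (m q) (habs hX) (habs hY)
    _ ≤ (∑ q, |α q| * m q * ((m q - 1 : ℕ) : ℝ) / 2 * D) / 2 := by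
        refine div_le_div_of_nonneg_right (sum_le_sum fun q _ => ?_) zero_le_two
        rw [← mul_assoc]
        exact mul_le_mul_of_nonneg_right (abs_gradf_coeff_mul_le (m q) (m q - 1) (α q))
          (norm1_nonneg _)
    _ = Jalpha l m α * D := by
        rw [Jalpha, sum_div, sum_div, sum_mul]
        refine sum_congr rfl fun q _ => ?_
        rw [mul_assoc |α q|, natCast_mul_natCast_pred]
        ring

theorem phi_comp_perm (X : Fin n → ℝ) (σ : Equiv.Perm (Fin n)) :
    Phi n l p m α (X ∘ σ) = Phi n l p m α X ∘ σ := by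
  ext j
  simp only [Phi, gradf, Function.comp_apply, cvec_comp_perm]

theorem phi_const_apply_eq (c : ℝ) (i j : Fin n) :
    Phi n l p m α (fun _ => c) i = Phi n l p m α (fun _ => c) j := by
  have h := congrFun (phi_comp_perm (p := p) (m := m) (α := α) (fun _ => c) (Equiv.swap i j)) i
  rwa [Function.comp_apply, Equiv.swap_apply_left,
    show (fun _ : Fin n => c) ∘ Equiv.swap i j = fun _ => c from rfl] at h

theorem phi_mem_Icc (X : Fin n → ℝ) (j : Fin n) : Phi n l p m α X j ∈ Icc (0 : ℝ) 1 := by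
  have h₁ := neg_one_lt_tanh (gradf n l p m α X j)
  have h₂ := tanh_lt_one (gradf n l p m α X j)
  constructor <;> simp only [Phi] <;> linarith

theorem continuous_phi_apply (j : Fin n) : Continuous fun X => Phi n l p m α X j := by
  unfold Phi gradf Cvec
  fun_prop

theorem exists_const_phi_eq_self :
    ∃ c ∈ Icc (0 : ℝ) 1, Phi n l p m α (fun _ => c) = fun _ => c := by
  obtain _ | ⟨⟨j⟩⟩ := isEmpty_or_nonempty (Fin n)
  · exact ⟨0, ⟨le_rfl, zero_le_one⟩, Subsingleton.elim _ _⟩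
  set h : ℝ → ℝ := fun c => Phi n l p m α (fun _ => c) j
  have hcont : Continuous fun c => h c - c :=
    ((continuous_phi_apply j).comp (continuous_pi fun _ => continuous_id)).sub continuous_id
  have h0 : (0 : ℝ) ∈ Icc (h 1 - 1) (h 0 - 0) :=
    ⟨by linarith [(phi_mem_Icc (p := p) (m := m) (α := α) (fun _ => (1 : ℝ)) j).2],
      by linarith [(phi_mem_Icc (p := p) (m := m) (α := α) (fun _ => (0 : ℝ)) j).1]⟩
  obtain ⟨c, hc, hfix⟩ := intermediate_value_Icc' zero_le_one hcont.continuousOn h0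
  refine ⟨c, hc, funext fun i => ?_⟩
  rw [phi_const_apply_eq c i j]
  exact sub_eq_zero.1 hfix

theorem norm1_sub_fixedPoint_le (hJ : Jalpha l m α < 1) {X Y : Fin n → ℝ}
    (hX : ∀ i, X i ∈ Icc (0 : ℝ) 1) (hY : ∀ i, Y i ∈ Icc (0 : ℝ) 1)
    (hYfix : Phi n l p m α Y = Y) :
    norm1 n (fun i => X i - Y i)
      ≤ norm1 n (fun i => X i - Phi n l p m α X i) / (1 - Jalpha l m α) := by
  rw [le_div_iff₀ (sub_pos.2 hJ)]
  have htri := norm1_sub_le_add X (Phi n l p m α X) Y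
  have hlip := norm1_phi_sub_le (p := p) (m := m) (α := α) hX hY
  rw [hYfix] at hlip
  linarith

theorem eq_of_phi_eq_self (hJ : Jalpha l m α < 1) {X Y : Fin n → ℝ}
    (hX : ∀ i, X i ∈ Icc (0 : ℝ) 1) (hY : ∀ i, Y i ∈ Icc (0 : ℝ) 1)
    (hXfix : Phi n l p m α X = X) (hYfix : Phi n l p m α Y = Y) : X = Y := by
  refine eq_of_norm1_sub_nonpos ((norm1_sub_fixedPoint_le hJ hX hY hYfix).trans ?_)
  simp [hXfix, norm1]

end Phi

theorem stmt14_general (n l : ℕ) (p : ℝ)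
    (m : Fin l → ℕ)
    (α : Fin l → ℝ)
    (hJ : (∑ q, |α q| * (m q : ℝ) * ((m q : ℝ) - 1)) / 4 < 1) :
    ∃ Xc : Fin n → ℝ, (∀ i, Xc i ∈ Set.Icc (0:ℝ) 1) ∧
      Phi n l p m α Xc = Xc ∧
      (∀ Y : Fin n → ℝ, (∀ i, Y i ∈ Set.Icc (0:ℝ) 1) → Phi n l p m α Y = Y → Y = Xc) ∧
      (∃ c : ℝ, Xc = fun _ => c) ∧
      ∀ X ∈ Xf n l p m α,
        norm1 n (fun i => X i - Xc i) ≤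
          5000 * (Calpha l p m α) ^ 2 /
            (1 - (∑ q, |α q| * (m q : ℝ) * ((m q : ℝ) - 1)) / 4) * (n : ℝ) ^ ((7:ℝ)/8) := by
  obtain ⟨c, hc, hfix⟩ := exists_const_phi_eq_self (n := n) (p := p) (m := m) (α := α)
  have hXc : ∀ i : Fin n, (fun _ => c) i ∈ Icc (0 : ℝ) 1 := fun _ => hc
  refine ⟨fun _ => c, hXc, hfix, fun Y hY hYfix => eq_of_phi_eq_self hJ hY hXc hYfix hfix,
    ⟨c, rfl⟩, fun X ⟨hX, hXnear⟩ => ?_⟩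
  rw [div_mul_eq_mul_div]
  exact (norm1_sub_fixedPoint_le hJ hX hXc hfix).trans
    (div_le_div_of_nonneg_right hXnear (sub_pos.2 hJ).le)

/-- if `J_α = ¼ Σ_q |α_q| m_q (m_q - 1) < 1`, then `X = Φ(X)` has a unique
solution `X_c` in `[0,1]ⁿ`, `X_c` is a constant vector, and every `X ∈ X_f` satisfies
`‖X - X_c‖₁ ≤ (5000 C_α²/(1 - J_α)) n^{7/8}`. -/
theorem stmt14 (n l : ℕ) (p : ℝ) (hp : p ∈ Set.Ioo (0:ℝ) 1)
    (m : Fin l → ℕ) (hm : ∀ q, 2 ≤ m q) (hminj : Function.Injective m)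
    (α : Fin l → ℝ)
    (hJ : (∑ q, |α q| * (m q : ℝ) * ((m q : ℝ) - 1)) / 4 < 1) :
    ∃ Xc : Fin n → ℝ, (∀ i, Xc i ∈ Set.Icc (0:ℝ) 1) ∧
      Phi n l p m α Xc = Xc ∧
      (∀ Y : Fin n → ℝ, (∀ i, Y i ∈ Set.Icc (0:ℝ) 1) → Phi n l p m α Y = Y → Y = Xc) ∧
      (∃ c : ℝ, Xc = fun _ => c) ∧
      ∀ X ∈ Xf n l p m α,
        norm1 n (fun i => X i - Xc i) ≤
          5000 * (Calpha l p m α) ^ 2 /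
            (1 - (∑ q, |α q| * (m q : ℝ) * ((m q : ℝ) - 1)) / 4) * (n : ℝ) ^ ((7:ℝ)/8) :=
  stmt14_general n l p m α hJ
end
end

section
/- Suppose α_q ≥ 0 for all q = 1,…,l and let X ∈ [0,1]^n. Then φ_α(min_i X_i) ≤ min_i Φ(X)_i and max_i Φ(X)_i ≤ φ_α(max_i X_i), where Φ(X) = (1ₙ + tanh(∇f(X)))/2. -/
open MeasureTheory ProbabilityTheory Real Set

noncomputable section

/-!
When every `α_q ≥ 0`, `∇ⱼf(X)` is nondecreasing in each coordinate of `X ≥ 0`, and `tanh` is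
increasing. `C_j^m(X)` is a sum of `(n-1)(n-2)⋯(n-m+1)` products of `m-1` entries of `X`, so
if all entries lie in `[a, b]` with `a ≥ 0`, it lies between `(n-1)_{m-1} a^{m-1}` and
`(n-1)_{m-1} b^{m-1}`. Since `(n-1)_{m-1} / n^{m-1} = ∏_{i=1}^{m-1} (1 - i/n)`, these bounds turn
`Φ(X)ⱼ` into exactly `φ_α(a)` and `φ_α(b)`; take `a = minᵢ Xᵢ` and `b = maxᵢ Xᵢ`.
-/

open scoped Finset

@[gcongr]
lemma Real.tanh_le_tanh {x y : ℝ} (h : x ≤ y) : tanh x ≤ tanh y := by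
  rwa [← artanh_le_artanh_iff ⟨neg_one_lt_tanh x, tanh_lt_one x⟩ ⟨neg_one_lt_tanh y, tanh_lt_one y⟩,
    artanh_tanh, artanh_tanh]

lemma Nat.cast_descFactorial_pred {K : Type*} [Field K] {n : ℕ} (hn : (n : K) ≠ 0) (k : ℕ) :
    ((n - 1).descFactorial k : K) = (∏ i ∈ Finset.Icc 1 k, (1 - (i : K) / n)) * (n : K) ^ k := by
  induction k with
  | zero => simp
  | succ k ih =>
    rw [Nat.descFactorial_succ, Nat.cast_mul, ih, Finset.prod_Icc_succ_top (by omega)]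
    rcases le_or_gt (k + 1) n with hk | hk
    · rw [Nat.sub_sub, Nat.cast_sub (by omega : 1 + k ≤ n)]
      field_simp
      push_cast
      ring
    · have hn₀ : n ≠ 0 := by rintro rfl; exact hn Nat.cast_zero
      have hzero : (∏ i ∈ Finset.Icc 1 k, (1 - (i : K) / n)) * (n : K) ^ k = 0 := by
        rw [← ih, Nat.descFactorial_eq_zero_iff_lt.mpr (by omega), Nat.cast_zero]
      linear_combination ((n - 1 - k : ℕ) - (1 - ((k + 1 : ℕ) : K) / n) * n) * hzero

lemma Fintype.card_embedding_avoiding {α : Type*} [Fintype α] [DecidableEq α] (k : ℕ) (a : α) :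
    #{g : Fin k ↪ α | ∀ i, g i ≠ a} = (Fintype.card α - 1).descFactorial k := by
  rw [← Fintype.card_subtype]
  refine (Fintype.card_congr (Equiv.codRestrict (Fin k) {a}ᶜ)).trans ?_
  simp [Fintype.card_embedding_eq, Finset.filter_ne', Finset.card_erase_of_mem]

section

variable {n : ℕ} {X : Fin n → ℝ}

lemma descFactorial_mul_pow_le_Cvec (m : ℕ) {a : ℝ} (ha : 0 ≤ a) (h : ∀ i, a ≤ X i) (j : Fin n) :
    ((n - 1).descFactorial (m - 1) : ℝ) * a ^ (m - 1) ≤ Cvec n m X j := by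
  have hcard := Fintype.card_embedding_avoiding (m - 1) j
  rw [Fintype.card_fin] at hcard
  rw [Cvec, ← hcard, ← nsmul_eq_mul]
  refine Finset.card_nsmul_le_sum _ _ _ fun g _ => ?_
  simpa using Finset.prod_le_prod (s := Finset.univ) (fun _ _ => ha) fun k _ => h (g k)

lemma Cvec_le_descFactorial_mul_pow (m : ℕ) {b : ℝ} (h₀ : ∀ i, 0 ≤ X i) (h : ∀ i, X i ≤ b) (j : Fin n) :
    Cvec n m X j ≤ ((n - 1).descFactorial (m - 1) : ℝ) * b ^ (m - 1) := by
  have hcard := Fintype.card_embedding_avoiding (m - 1) j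
  rw [Fintype.card_fin] at hcard
  rw [Cvec, ← hcard, ← nsmul_eq_mul]
  refine Finset.sum_le_card_nsmul _ _ _ fun g _ => ?_
  simpa using Finset.prod_le_prod (s := Finset.univ) (fun k _ => h₀ (g k)) fun k _ => h (g k)

end

section

variable {n l : ℕ} {p : ℝ} {m : Fin l → ℕ} {α : Fin l → ℝ} {X : Fin n → ℝ}

lemma phiA_eq (hn : n ≠ 0) (x : ℝ) :
    phiA n l p m α x = (1 + tanh ((∑ q, ((m q : ℝ) * α q / (2 * (n : ℝ) ^ (m q - 1))) *
      (((n - 1).descFactorial (m q - 1) : ℝ) * x ^ (m q - 1))) + log (p / (1 - p)) / 2)) / 2 := by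
  have hn' : (n : ℝ) ≠ 0 := Nat.cast_ne_zero.mpr hn
  simp only [phiA, Nat.cast_descFactorial_pred hn', Finset.sum_div, add_comm (log _ / 2)]
  congr 4
  refine Finset.sum_congr rfl fun q _ => ?_
  field_simp

lemma phiA_le_Phi (hn : n ≠ 0) (hα : ∀ q, 0 ≤ α q) {a : ℝ} (ha : 0 ≤ a)
    (h : ∀ i, a ≤ X i) (j : Fin n) : phiA n l p m α a ≤ Phi n l p m α X j := by
  rw [phiA_eq hn, Phi, gradf]
  gcongr with q
  · have := hα q; positivity
  · exact descFactorial_mul_pow_le_Cvec _ ha h j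

lemma Phi_le_phiA (hn : n ≠ 0) (hα : ∀ q, 0 ≤ α q) {b : ℝ} (h₀ : ∀ i, 0 ≤ X i)
    (h : ∀ i, X i ≤ b) (j : Fin n) : Phi n l p m α X j ≤ phiA n l p m α b := by
  rw [phiA_eq hn, Phi, gradf]
  gcongr with q
  · have := hα q; positivity
  · exact Cvec_le_descFactorial_mul_pow _ h₀ h j

end

theorem stmt15_general (n l : ℕ) (hn : 0 < n) (p : ℝ)
    (m : Fin l → ℕ)
    (α : Fin l → ℝ) (hα : ∀ q, 0 ≤ α q)
    (X : Fin n → ℝ) (hX : ∀ i, X i ∈ Set.Icc (0:ℝ) 1) :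
    phiA n l p m α (Finset.univ.inf' ⟨⟨0, hn⟩, Finset.mem_univ _⟩ X) ≤
      Finset.univ.inf' ⟨⟨0, hn⟩, Finset.mem_univ _⟩ (Phi n l p m α X) ∧
    Finset.univ.sup' ⟨⟨0, hn⟩, Finset.mem_univ _⟩ (Phi n l p m α X) ≤
      phiA n l p m α (Finset.univ.sup' ⟨⟨0, hn⟩, Finset.mem_univ _⟩ X) := by
  have h₀ (i : Fin n) : 0 ≤ X i := (hX i).1
  constructor
  · refine Finset.le_inf' _ _ fun j _ => phiA_le_Phi hn.ne' hα ?_ ?_ j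
    · exact Finset.le_inf' _ _ fun i _ => h₀ i
    · exact fun i => Finset.inf'_le _ (Finset.mem_univ i)
  · exact Finset.sup'_le _ _ fun j _ =>
      Phi_le_phiA hn.ne' hα h₀ (fun i => Finset.le_sup' _ (Finset.mem_univ i)) j

/-- if `α_q ≥ 0` for all `q` and `X ∈ [0,1]ⁿ`, then
`φ_α(minᵢ Xᵢ) ≤ minᵢ Φ(X)ᵢ` and `maxᵢ Φ(X)ᵢ ≤ φ_α(maxᵢ Xᵢ)`. -/
theorem stmt15 (n l : ℕ) (hn : 0 < n) (p : ℝ) (hp : p ∈ Set.Ioo (0:ℝ) 1)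
    (m : Fin l → ℕ) (hm : ∀ q, 2 ≤ m q) (hminj : Function.Injective m)
    (α : Fin l → ℝ) (hα : ∀ q, 0 ≤ α q)
    (X : Fin n → ℝ) (hX : ∀ i, X i ∈ Set.Icc (0:ℝ) 1) :
    phiA n l p m α (Finset.univ.inf' ⟨⟨0, hn⟩, Finset.mem_univ _⟩ X) ≤
      Finset.univ.inf' ⟨⟨0, hn⟩, Finset.mem_univ _⟩ (Phi n l p m α X) ∧
    Finset.univ.sup' ⟨⟨0, hn⟩, Finset.mem_univ _⟩ (Phi n l p m α X) ≤
      phiA n l p m α (Finset.univ.sup' ⟨⟨0, hn⟩, Finset.mem_univ _⟩ X) :=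
  stmt15_general n l hn p m α hα X hX

end
end
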